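/- Let S be a set of paths each of length at least 2 in a finite quiver, with len(S) the maximal length of paths in S. For every n ≥ 0, if O_n(S) is nonempty then every n-overlap w ∈ O_n(S) satisfies n + 1 ≤ len(w) ≤ len(S)·n − n + 1 (for n ≥ 1); equivalently mino_n(S) ≥ n + 1 and maxo_n(S) ≤ len(S)·n − n + 1. -/

import Mathlib

universe u v

/-! Combinatorics of paths in a quiver: divisibility, overlaps, quasioverlaps. -/

/-- The type of all paths in a quiver `V`, bundled with their endpoints. -/
abbrev PathIn (V : Type u) [Quiver.{v + 1} V] : Type (max u (v + 1)) :=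
  Σ a b : V, Quiver.Path a b

namespace PathIn

variable {V : Type u} [Quiver.{v + 1} V]

/-- Source of a bundled path. -/
def src (p : PathIn V) : V := p.1

/-- Target of a bundled path. -/
def tgt (p : PathIn V) : V := p.2.1

/-- Length of a bundled path. -/
def len (p : PathIn V) : ℕ := p.2.2.length

/-- The path of length zero at a vertex. -/
def vert (a : V) : PathIn V := ⟨a, a, Quiver.Path.nil⟩

/-- Concatenation of bundled paths (junk value `p` if the endpoints do not match). -/
noncomputable def comp (p q : PathIn V) : PathIn V :=
  open Classical in
  if h : p.tgt = q.src then ⟨p.1, q.2.1, p.2.2.comp (q.2.2.cast h.symm rfl)⟩ else p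

/-- `LDiv p q` : `p` divides `q` on the left, i.e. `q = p v` for some path `v`. -/
def LDiv (p q : PathIn V) : Prop :=
  ∃ v : PathIn V, p.tgt = v.src ∧ q = p.comp v

/-- `RDiv p q` : `p` divides `q` on the right, i.e. `q = u p` for some path `u`. -/
def RDiv (p q : PathIn V) : Prop :=
  ∃ u : PathIn V, u.tgt = p.src ∧ q = u.comp p

/-- `Div p q` : `p` divides `q`, i.e. `q = u p v` for some paths `u, v`. -/
def Div (p q : PathIn V) : Prop :=
  ∃ u v : PathIn V, u.tgt = p.src ∧ p.tgt = v.src ∧ q = (u.comp p).comp v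

/-- A set of paths is reduced if no element of it properly divides another element. -/
def Reduced (S : Set (PathIn V)) : Prop :=
  ∀ q ∈ S, ∀ p ∈ S, p ≠ q → ¬ Div p q

/-- `p` is an `S`-path if some element of `S` divides it on the right. -/
def IsSPath (S : Set (PathIn V)) (p : PathIn V) : Prop :=
  ∃ s ∈ S, RDiv s p

/-- `q` `S`-vanishes `p` (written `q ∣_S p`): `p = q u` where no element of `S` divides `u`. -/
def SVan (S : Set (PathIn V)) (q p : PathIn V) : Prop :=
  ∃ u : PathIn V, q.tgt = u.src ∧ p = q.comp u ∧ ∀ s ∈ S, ¬ Div s u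

/-- `q` almost `S`-vanishes `p` (written `q ∣_S^a p`): `p = q u`, `q` does not `S`-vanish `p`,
and for every factorization `u = u₁ u₂` with `u₂` of positive length, `q` `S`-vanishes `q u₁`. -/
def ASVan (S : Set (PathIn V)) (q p : PathIn V) : Prop :=
  ∃ u : PathIn V, q.tgt = u.src ∧ p = q.comp u ∧ ¬ SVan S q p ∧
    ∀ u₁ u₂ : PathIn V, u₁.tgt = u₂.src → u = u₁.comp u₂ → 0 < u₂.len →
      SVan S q (q.comp u₁)

/-- The set of `n`-overlaps of a set of paths `S`. -/
def Overlaps (S : Set (PathIn V)) : ℕ → Set (PathIn V)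
  | 0 => {p | p.len = 1}
  | 1 => S
  | (n + 2) => {w | ∃ w₁ ∈ Overlaps S (n + 1), ∃ w₂ ∈ Overlaps S n,
      SVan S w₁ w ∧ ASVan S w₂ w}

/-- The set of `n`-quasioverlaps of a set of paths `S`: pairs `(w, v)` with `v` of
positive length. -/
def QOverlaps (S : Set (PathIn V)) : ℕ → Set (PathIn V × PathIn V)
  | 0 => {wv | wv.1.len = 0 ∧ 0 < wv.2.len ∧ wv.2.tgt = wv.1.src}
  | 1 => {wv | 0 < wv.1.len ∧ 0 < wv.2.len ∧ wv.2.tgt = wv.1.src ∧ wv.2.comp wv.1 ∈ S}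
  | (n + 2) => {wv | ∃ w₁, (w₁, wv.2) ∈ QOverlaps S (n + 1) ∧
      ∃ w₂, (w₂, wv.2) ∈ QOverlaps S n ∧ SVan S w₁ wv.1 ∧ ASVan S w₂ wv.1}

/-- `sup` of the lengths of the `n`-overlaps of `S`, in `EReal` (`-∞` if there are none). -/
noncomputable def maxo (S : Set (PathIn V)) (n : ℕ) : EReal :=
  sSup ((fun w => (w.len : EReal)) '' Overlaps S n)

/-- `inf` of the lengths of the `n`-overlaps of `S`, in `EReal` (`+∞` if there are none). -/
noncomputable def mino (S : Set (PathIn V)) (n : ℕ) : EReal :=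
  sInf ((fun w => (w.len : EReal)) '' Overlaps S n)

/-- `sup` of the lengths of the first components of `n`-quasioverlaps of `S`. -/
noncomputable def maxqo (S : Set (PathIn V)) (n : ℕ) : EReal :=
  sSup ((fun w => (w.len : EReal)) '' {w | ∃ v, (w, v) ∈ QOverlaps S n})

/-- `inf` of the lengths of the first components of `n`-quasioverlaps of `S`. -/
noncomputable def minqo (S : Set (PathIn V)) (n : ℕ) : EReal :=
  sInf ((fun w => (w.len : EReal)) '' {w | ∃ v, (w, v) ∈ QOverlaps S n})

end PathIn

/-! An `(n+2)`-overlap `w` is `w₁ u = w₂ u'` with `w₁`, `w₂` overlaps of the two previous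
orders. Since `w₂` almost `S`-vanishes `w`, some `s ∈ S` divides `u'`, but none divides a
proper prefix of `u'`; so `s` is a suffix of `u'`, which gives `len w ≥ len w₂ + 2`.
Since `w₁` `S`-vanishes `w`, the tail `u` is not divisible by this suffix `s` of `w`, so it is
strictly shorter than `s`, which gives `len w ≤ len w₁ + len(S) - 1`. Both bounds then follow
by induction on `n`. -/

namespace Quiver.Path

variable {V : Type*} [Quiver V]

theorem exists_eq_comp_of_comp_eq_comp {a b' c : V} (y' : Path b' c) :
    ∀ {b : V} (x : Path a b) (y : Path b c) (x' : Path a b'),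
      x.comp y = x'.comp y' → y'.length ≤ y.length →
      ∃ m : Path b b', y = m.comp y' ∧ x' = x.comp m := by
  induction y' with
  | nil => exact fun x y x' h _ => ⟨y, by simp, by simpa using h.symm⟩
  | cons q' e' ih =>
    intro b x y x' h hlen
    cases y with
    | nil => simp at hlen
    | cons q e =>
      rw [comp_cons, comp_cons] at h
      obtain rfl := obj_eq_of_cons_eq_cons h
      obtain rfl := eq_of_heq (hom_heq_of_cons_eq_cons h)
      obtain ⟨m, rfl, rfl⟩ :=
        ih x q x' (eq_of_heq (heq_of_cons_eq_cons h)) (by simpa using hlen)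
      exact ⟨m, by rw [comp_cons], rfl⟩

end Quiver.Path

namespace PathIn

variable {V : Type u} [Quiver.{v + 1} V]

theorem mk_comp_mk {a b c : V} (p : Quiver.Path a b) (q : Quiver.Path b c) :
    comp ⟨a, b, p⟩ ⟨b, c, q⟩ = ⟨a, c, p.comp q⟩ := by
  simp [comp, tgt, src]

theorem len_comp {p q : PathIn V} (h : p.tgt = q.src) : (p.comp q).len = p.len + q.len := by
  obtain ⟨a, b, p⟩ := p
  obtain ⟨b', c, q⟩ := q
  change b = b' at h
  subst h
  rw [mk_comp_mk]
  exact Quiver.Path.length_comp p q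

theorem src_comp {p q : PathIn V} (h : p.tgt = q.src) : (p.comp q).src = p.src := by
  obtain ⟨a, b, p⟩ := p
  obtain ⟨b', c, q⟩ := q
  change b = b' at h
  subst h
  rw [mk_comp_mk]
  rfl

theorem tgt_comp {p q : PathIn V} (h : p.tgt = q.src) : (p.comp q).tgt = q.tgt := by
  obtain ⟨a, b, p⟩ := p
  obtain ⟨b', c, q⟩ := q
  change b = b' at h
  subst h
  rw [mk_comp_mk]
  rfl

theorem comp_assoc {p q r : PathIn V} (hpq : p.tgt = q.src) (hqr : q.tgt = r.src) :
    (p.comp q).comp r = p.comp (q.comp r) := by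
  obtain ⟨a, b, p⟩ := p
  obtain ⟨b', c, q⟩ := q
  obtain ⟨c', d, r⟩ := r
  change b = b' at hpq
  change c = c' at hqr
  subst hpq hqr
  rw [mk_comp_mk, mk_comp_mk, mk_comp_mk, mk_comp_mk, Quiver.Path.comp_assoc]

theorem comp_left_cancel {p q r : PathIn V} (hq : p.tgt = q.src) (hr : p.tgt = r.src)
    (h : p.comp q = p.comp r) : q = r := by
  obtain ⟨a, b, p⟩ := p
  obtain ⟨b', c, q⟩ := q
  obtain ⟨b'', d, r⟩ := r
  change b = b' at hq
  change b = b'' at hr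
  subst hq hr
  rw [mk_comp_mk, mk_comp_mk] at h
  obtain rfl : c = d := congrArg (·.2.1) h
  simp_all

theorem comp_eq_self_of_len_eq_zero {p q : PathIn V} (h : p.tgt = q.src) (hq : q.len = 0) :
    p.comp q = p := by
  obtain ⟨a, b, p⟩ := p
  obtain ⟨b', c, q⟩ := q
  change b = b' at h
  subst h
  obtain rfl := Quiver.Path.eq_of_length_zero q hq
  obtain rfl := Quiver.Path.eq_nil_of_length_zero q hq
  rw [mk_comp_mk, Quiver.Path.comp_nil]

theorem rdiv_of_comp_eq_comp {x y x' y' : PathIn V} (hxy : x.tgt = y.src)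
    (hxy' : x'.tgt = y'.src) (h : x.comp y = x'.comp y') (hlen : y'.len ≤ y.len) :
    RDiv y' y := by
  obtain ⟨a, b, x⟩ := x
  obtain ⟨b₀, c, y⟩ := y
  obtain ⟨a', b', x'⟩ := x'
  obtain ⟨b₀', c', y'⟩ := y'
  change b = b₀ at hxy
  change b' = b₀' at hxy'
  subst hxy hxy'
  rw [mk_comp_mk, mk_comp_mk] at h
  obtain rfl : a = a' := congrArg (·.1) h
  obtain rfl : c = c' := congrArg (·.2.1) h
  obtain ⟨m, rfl, -⟩ :=
    y'.exists_eq_comp_of_comp_eq_comp x y x' (by simpa using h) hlen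
  exact ⟨⟨b, b', m⟩, rfl, (mk_comp_mk m y').symm⟩

theorem RDiv.div {s p : PathIn V} (h : RDiv s p) : Div s p := by
  obtain ⟨u, hu, rfl⟩ := h
  exact ⟨u, vert s.tgt, hu, rfl,
    (comp_eq_self_of_len_eq_zero (by rw [tgt_comp hu]; rfl) rfl).symm⟩

theorem RDiv.len_le {s p : PathIn V} (h : RDiv s p) : s.len ≤ p.len := by
  obtain ⟨u, hu, rfl⟩ := h
  rw [len_comp hu]
  omega

theorem RDiv.comp_left {s p : PathIn V} (h : RDiv s p) {q : PathIn V} (hq : q.tgt = p.src) :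
    RDiv s (q.comp p) := by
  obtain ⟨u, hu, rfl⟩ := h
  rw [src_comp hu] at hq
  exact ⟨q.comp u, by rw [tgt_comp hq, hu], (comp_assoc hq hu).symm⟩

theorem Div.rdiv_of_forall_not_div_prefix {s p : PathIn V} (h : Div s p)
    (hpre : ∀ p₁ p₂ : PathIn V, p₁.tgt = p₂.src → p = p₁.comp p₂ → 0 < p₂.len → ¬ Div s p₁) :
    RDiv s p := by
  obtain ⟨a, b, has, hsb, rfl⟩ := h
  have hasb : (a.comp s).tgt = b.src := by rw [tgt_comp has, hsb]
  rcases Nat.eq_zero_or_pos b.len with hb | hb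
  · rw [comp_eq_self_of_len_eq_zero hasb hb]
    exact ⟨a, has, rfl⟩
  · exact absurd (RDiv.div ⟨a, has, rfl⟩) (hpre _ b hasb rfl hb)

variable {S : Set (PathIn V)}

theorem ASVan.exists_mem_rdiv {q p : PathIn V} (h : ASVan S q p) :
    ∃ s ∈ S, RDiv s p ∧ q.len + s.len ≤ p.len := by
  obtain ⟨u, hqu, rfl, hnot, hpre⟩ := h
  obtain ⟨s, hs, hdiv⟩ : ∃ s ∈ S, Div s u := by
    by_contra! hfree
    exact hnot ⟨u, hqu, rfl, hfree⟩
  have hsu : RDiv s u := hdiv.rdiv_of_forall_not_div_prefix fun u₁ u₂ h₁₂ hu hu₂ => by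
    obtain ⟨t, hqt, hcomp, ht⟩ := hpre u₁ u₂ h₁₂ hu hu₂
    have hqu₁ : q.tgt = u₁.src := by rw [hqu, hu, src_comp h₁₂]
    rw [comp_left_cancel hqu₁ hqt hcomp]
    exact ht s hs
  exact ⟨s, hs, hsu.comp_left hqu, by have := hsu.len_le; rw [len_comp hqu]; omega⟩

theorem SVan.len_lt_add_of_rdiv {q p s : PathIn V} (h : SVan S q p) (hs : s ∈ S)
    (hsp : RDiv s p) : p.len < q.len + s.len := by
  obtain ⟨u, hqu, rfl, hfree⟩ := h
  obtain ⟨x, hxs, hp⟩ := hsp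
  rw [len_comp hqu]
  by_contra! hle
  exact hfree s hs (rdiv_of_comp_eq_comp hqu hxs hp (by omega)).div

theorem add_one_le_len_of_mem_overlaps (hS : ∀ p ∈ S, 2 ≤ p.len) :
    ∀ {n : ℕ} {w : PathIn V}, w ∈ Overlaps S n → n + 1 ≤ w.len
  | 0, _, hw => hw.ge
  | 1, w, hw => hS w hw
  | n + 2, _, ⟨_, _, _, hw₂, _, hasv⟩ => by
    obtain ⟨s, hs, -, hlen⟩ := hasv.exists_mem_rdiv
    have ih := add_one_le_len_of_mem_overlaps hS hw₂
    have hs₂ := hS s hs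
    omega

theorem len_add_le_of_mem_overlaps {L : ℕ} (hL : ∀ p ∈ S, p.len ≤ L) :
    ∀ {n : ℕ} {w : PathIn V}, w ∈ Overlaps S n → w.len + n ≤ L * n + 1
  | 0, _, hw => hw.le
  | 1, w, hw => by simpa using hL w hw
  | n + 2, _, ⟨_, hw₁, _, _, hsv, hasv⟩ => by
    obtain ⟨s, hs, hsw, -⟩ := hasv.exists_mem_rdiv
    have ih := len_add_le_of_mem_overlaps hL hw₁
    have htail := hsv.len_lt_add_of_rdiv hs hsw
    have hsL := hL s hs
    rw [Nat.mul_succ]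
    omega

end PathIn

/-- bounds for the lengths of `n`-overlaps: every `w ∈ O_n(S)` satisfies
`n + 1 ≤ len w`, and `len w ≤ len(S)·n - n + 1` for `n ≥ 1`; equivalently
`mino_n(S) ≥ n + 1` and `maxo_n(S) ≤ len(S)·n - n + 1`. -/
theorem overlap_length_bounds {V : Type u} [Quiver.{v + 1} V]
    [Fintype V] [∀ a b : V, Fintype (a ⟶ b)]
    (S : Set (PathIn V)) (hS : ∀ p ∈ S, 2 ≤ p.len)
    (L : ℕ) (hL : IsGreatest (PathIn.len '' S) L) (n : ℕ) :
    (∀ w ∈ PathIn.Overlaps S n,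
        (n : ℤ) + 1 ≤ (w.len : ℤ) ∧ (1 ≤ n → (w.len : ℤ) ≤ (L : ℤ) * n - n + 1)) ∧
    ((n : EReal) + 1 ≤ PathIn.mino S n) ∧
    (1 ≤ n → PathIn.maxo S n ≤ (L : EReal) * (n : EReal) - (n : EReal) + 1) := by
  have lower (w) (hw : w ∈ PathIn.Overlaps S n) : n + 1 ≤ w.len :=
    PathIn.add_one_le_len_of_mem_overlaps hS hw
  have upper (w) (hw : w ∈ PathIn.Overlaps S n) : (w.len : ℝ) ≤ L * n - n + 1 := by
    have := PathIn.len_add_le_of_mem_overlaps (fun p hp => hL.2 ⟨p, hp, rfl⟩) hw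
    linarith [(by exact_mod_cast this : (w.len : ℝ) + n ≤ L * n + 1)]
  refine ⟨fun w hw => ⟨by exact_mod_cast lower w hw, fun _ => by exact_mod_cast upper w hw⟩,
    le_sInf ?_, fun _ => sSup_le ?_⟩
  · rintro _ ⟨w, hw, rfl⟩
    dsimp only
    exact_mod_cast lower w hw
  · rintro _ ⟨w, hw, rfl⟩
    have h := EReal.coe_le_coe_iff.mpr (upper w hw)
    simpa [EReal.coe_sub, EReal.coe_mul] using h
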